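/- arXiv:math/0404460 — 2 statements merged into one kernel-verified Lean document; each statement's English description precedes it below -/
import Mathlib

section
/- Gradient representation: in the zero-range setting with Λ = Λ₁ ∪ Λ₂, for every f and every n ∈ {1,…,N}, ν_Λ^N[f|η̄_{Λ₁}=n] − ν_Λ^N[f|η̄_{Λ₁}=n−1] = (γ(n−1)/(n γ(n)))·( ν_Λ^N[ c(η_y) ∑_{x∈Λ₁} h(η_x) ∂_{yx}f | η̄_{Λ₁}=n−1 ] + ν_Λ^N[ f, c(η_y) ∑_{x∈Λ₁} h(η_x) | η̄_{Λ₁}=n−1 ] ), where ∂_{yx}f(η) = f(η−δ_y+δ_x)−f(η), h(k)=(k+1)/c(k+1), γ(n)=ν_Λ^N[η̄_{Λ₁}=n], and y ∈ Λ₂ is arbitrary. -/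
/-!
On the event `η̄_{Λ₁} = n` one has `n = ∑_{x ∈ Λ₁} η_x`. Moving one particle from `y ∉ Λ₁` to
`x ∈ Λ₁`, `η ↦ η - δ_y + δ_x`, is a bijection from the configurations of the level `n - 1` with
`η_y > 0` onto those of the level `n` with `η_x > 0`, and it multiplies the weight
`∏_z 1/c(η_z)!` by `c(η_y)/c(η_x + 1)`. Hence, for unnormalised level sums,
`n ∑_{η̄ = n} w f = ∑_{η̄ = n-1} w c(η_y) ∑_{x ∈ Λ₁} h(η_x) f(η - δ_y + δ_x)`.
Applied to `f` and to `1` and divided by the masses of the two levels, this is the claimed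
identity, the covariance term absorbing `f(η)` in `∂_{yx} f`.
-/

open Finset

/-- `cfact c n = c(1)⋯c(n)`, with `cfact c 0 = 1`. -/
noncomputable def cfact (c : ℕ → ℝ) (n : ℕ) : ℝ := ∏ k ∈ Finset.range n, c (k + 1)

/-- Expectation of `f` under the canonical zero-range measure `ν_Λ^N` conditioned on
`η̄_{Λ₁} = n`. -/
noncomputable def condExp (c : ℕ → ℝ) {Λ : Type*} [Fintype Λ] [DecidableEq Λ]
    (Λ₁ : Finset Λ) (N n : ℕ) (f : (Λ → ℕ) → ℝ) : ℝ :=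
  (∑ σ : Λ → Fin (N + 1),
      if (∑ z, (σ z : ℕ)) = N ∧ (∑ z ∈ Λ₁, (σ z : ℕ)) = n
      then (∏ z, (cfact c (σ z : ℕ))⁻¹) * f (fun z => (σ z : ℕ)) else 0) /
  (∑ σ : Λ → Fin (N + 1),
      if (∑ z, (σ z : ℕ)) = N ∧ (∑ z ∈ Λ₁, (σ z : ℕ)) = n
      then ∏ z, (cfact c (σ z : ℕ))⁻¹ else 0)

/-- `γ(n) = ν_Λ^N[η̄_{Λ₁} = n]`. -/
noncomputable def gammaFun (c : ℕ → ℝ) {Λ : Type*} [Fintype Λ] [DecidableEq Λ]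
    (Λ₁ : Finset Λ) (N n : ℕ) : ℝ :=
  (∑ σ : Λ → Fin (N + 1),
      if (∑ z, (σ z : ℕ)) = N ∧ (∑ z ∈ Λ₁, (σ z : ℕ)) = n
      then ∏ z, (cfact c (σ z : ℕ))⁻¹ else 0) /
  (∑ σ : Λ → Fin (N + 1),
      if (∑ z, (σ z : ℕ)) = N then ∏ z, (cfact c (σ z : ℕ))⁻¹ else 0)

namespace ZeroRange

lemma cfact_succ (c : ℕ → ℝ) (k : ℕ) : cfact c (k + 1) = cfact c k * c (k + 1) :=
  prod_range_succ _ _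

noncomputable def partitionFn (c : ℕ → ℝ) (Λ : Type*) [Fintype Λ] [DecidableEq Λ] (N : ℕ) : ℝ :=
  ∑ σ : Λ → Fin (N + 1), if (∑ z, (σ z : ℕ)) = N then ∏ z, (cfact c (σ z : ℕ))⁻¹ else 0

variable {Λ : Type*} [DecidableEq Λ]

/-- `η - δ_y + δ_x`, written as in the statement of `gradient_representation`; it is reducible
so that rewriting sees through it there. -/
abbrev jump (y x : Λ) (η : Λ → ℕ) : Λ → ℕ :=
  fun z => if z = x then η x + 1 else if z = y then η y - 1 else η z

variable {x y : Λ} {η : Λ → ℕ}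

lemma jump_jump (hxy : x ≠ y) (hη : 1 ≤ η y) : jump x y (jump y x η) = η := by
  funext z
  by_cases hzy : z = y
  · subst hzy; simp only [jump, ↓reduceIte, hxy.symm]; omega
  · by_cases hzx : z = x
    · subst hzx; simp [jump, hxy]
    · simp [jump, hzx, hzy]

lemma sum_jump_add (hxy : x ≠ y) (hη : 1 ≤ η y) (s : Finset Λ) :
    ∑ z ∈ s, jump y x η z + (if y ∈ s then 1 else 0) =
      ∑ z ∈ s, η z + (if x ∈ s then 1 else 0) := by
  rw [← sum_ite_eq' s y (fun _ => 1), ← sum_ite_eq' s x (fun _ => 1),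
    ← sum_add_distrib, ← sum_add_distrib]
  refine sum_congr rfl fun z _ => ?_
  by_cases hzx : z = x
  · subst hzx; simp [jump, hxy]
  · by_cases hzy : z = y
    · subst hzy; simp only [jump, hzx, ↓reduceIte, add_zero]; omega
    · simp [jump, hzx, hzy]

variable [Fintype Λ]

noncomputable def weight (c : ℕ → ℝ) (η : Λ → ℕ) : ℝ := ∏ z, (cfact c (η z))⁻¹

def level (Λ₁ : Finset Λ) (N n : ℕ) : Finset (Λ → ℕ) :=
  {η ∈ Fintype.piFinset fun _ => range (N + 1) | ∑ z, η z = N ∧ ∑ z ∈ Λ₁, η z = n}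

lemma mem_level {Λ₁ : Finset Λ} {N n : ℕ} {η : Λ → ℕ} :
    η ∈ level Λ₁ N n ↔ ∑ z, η z = N ∧ ∑ z ∈ Λ₁, η z = n := by
  simp only [level, mem_filter, Fintype.mem_piFinset, mem_range, and_iff_right_iff_imp]
  rintro ⟨hN, -⟩ z
  exact Nat.lt_succ_of_le (hN ▸ single_le_sum (fun _ _ => Nat.zero_le _) (mem_univ z))

noncomputable def levelSum (c : ℕ → ℝ) (Λ₁ : Finset Λ) (N n : ℕ) (g : (Λ → ℕ) → ℝ) : ℝ :=
  ∑ η ∈ level Λ₁ N n, weight c η * g η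

lemma levelSum_add (c : ℕ → ℝ) (Λ₁ : Finset Λ) (N n : ℕ) (g₁ g₂ : (Λ → ℕ) → ℝ) :
    levelSum c Λ₁ N n (fun η => g₁ η + g₂ η) = levelSum c Λ₁ N n g₁ + levelSum c Λ₁ N n g₂ := by
  simp only [levelSum, mul_add, sum_add_distrib]

lemma sum_fin_eq_sum_piFinset_range (N : ℕ) (F : (Λ → ℕ) → ℝ) :
    ∑ σ : Λ → Fin (N + 1), F (fun z => σ z) =
      ∑ η ∈ Fintype.piFinset fun _ => range (N + 1), F η := by
  refine sum_nbij' (fun σ z => σ z) (fun (η : Λ → ℕ) z => Fin.ofNat (N + 1) (η z))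
    ?_ ?_ ?_ ?_ ?_
  · simp [Fintype.mem_piFinset, Fin.is_le]
  · simp
  · intro σ _
    funext z
    simp
  · intro η hη
    funext z
    exact Nat.mod_eq_of_lt (mem_range.1 (Fintype.mem_piFinset.1 hη z))
  · simp

lemma sum_fin_ite_eq_levelSum (c : ℕ → ℝ) (Λ₁ : Finset Λ) (N n : ℕ) (g : (Λ → ℕ) → ℝ) :
    (∑ σ : Λ → Fin (N + 1),
      if (∑ z, (σ z : ℕ)) = N ∧ (∑ z ∈ Λ₁, (σ z : ℕ)) = n
      then (∏ z, (cfact c (σ z : ℕ))⁻¹) * g (fun z => (σ z : ℕ)) else 0) =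
      levelSum c Λ₁ N n g := by
  rw [levelSum, level, sum_filter]
  exact sum_fin_eq_sum_piFinset_range N
    (fun η => if ∑ z, η z = N ∧ ∑ z ∈ Λ₁, η z = n then weight c η * g η else 0)

lemma levelSum_one_eq_sum_fin (c : ℕ → ℝ) (Λ₁ : Finset Λ) (N n : ℕ) :
    levelSum c Λ₁ N n 1 = ∑ σ : Λ → Fin (N + 1),
      if (∑ z, (σ z : ℕ)) = N ∧ (∑ z ∈ Λ₁, (σ z : ℕ)) = n
      then ∏ z, (cfact c (σ z : ℕ))⁻¹ else 0 := by
  simp [← sum_fin_ite_eq_levelSum]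

lemma condExp_eq_levelSum (c : ℕ → ℝ) (Λ₁ : Finset Λ) (N n : ℕ) (f : (Λ → ℕ) → ℝ) :
    condExp c Λ₁ N n f = levelSum c Λ₁ N n f / levelSum c Λ₁ N n 1 := by
  rw [condExp, sum_fin_ite_eq_levelSum, levelSum_one_eq_sum_fin]

lemma gammaFun_eq_levelSum (c : ℕ → ℝ) (Λ₁ : Finset Λ) (N n : ℕ) :
    gammaFun c Λ₁ N n = levelSum c Λ₁ N n 1 / partitionFn c Λ N := by
  rw [gammaFun, partitionFn, levelSum_one_eq_sum_fin]

lemma jump_mem_level {Λ₁ : Finset Λ} {N m : ℕ} (hx : x ∈ Λ₁) (hy : y ∉ Λ₁)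
    (hη : η ∈ level Λ₁ N m) (hηy : 1 ≤ η y) : jump y x η ∈ level Λ₁ N (m + 1) := by
  have hxy : x ≠ y := fun h => hy (h ▸ hx)
  have htot := sum_jump_add hxy hηy univ
  have hΛ₁ := sum_jump_add hxy hηy Λ₁
  simp only [mem_univ, if_true, hx, hy, if_false] at htot hΛ₁
  rw [mem_level] at hη ⊢
  omega

lemma jump_mem_level_pred {Λ₁ : Finset Λ} {N m : ℕ} (hx : x ∈ Λ₁) (hy : y ∉ Λ₁)
    (hη : η ∈ level Λ₁ N (m + 1)) (hηx : 1 ≤ η x) : jump x y η ∈ level Λ₁ N m := by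
  have hxy : x ≠ y := fun h => hy (h ▸ hx)
  have htot := sum_jump_add hxy.symm hηx univ
  have hΛ₁ := sum_jump_add hxy.symm hηx Λ₁
  simp only [mem_univ, if_true, hx, hy, if_false] at htot hΛ₁
  rw [mem_level] at hη ⊢
  omega

lemma weight_jump (c : ℕ → ℝ) (hxy : x ≠ y) (hη : 1 ≤ η y) (hc : c (η y) ≠ 0) :
    weight c (jump y x η) = weight c η * c (η y) / c (η x + 1) := by
  have hfactor : ∀ z, (cfact c (jump y x η z))⁻¹ = (cfact c (η z))⁻¹ *
      ((if z = x then (c (η x + 1))⁻¹ else 1) * (if z = y then c (η y) else 1)) := by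
    intro z
    by_cases hzx : z = x
    · subst hzx; simp [jump, hxy, cfact_succ, mul_comm]
    · by_cases hzy : z = y
      · subst hzy
        obtain ⟨k, hk⟩ : ∃ k, η z = k + 1 := ⟨η z - 1, by omega⟩
        rw [hk] at hc
        simp only [jump, hzx, ↓reduceIte, hk, add_tsub_cancel_right, cfact_succ, mul_inv_rev,
          one_mul]
        field_simp
      · simp [jump, hzx, hzy]
  simp only [weight, hfactor, prod_mul_distrib, prod_ite_eq', mem_univ, if_true]
  ring

/-- Change of variables `τ = η - δ_y + δ_x`: the terms with `τ_x = 0` or `η_y = 0` vanish,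
the latter because `c 0 = 0`. -/
lemma sum_level_succ_mul_apply_eq (c : ℕ → ℝ) (hc0 : c 0 = 0) (hc : ∀ k, 0 < k → c k ≠ 0)
    {Λ₁ : Finset Λ} (N m : ℕ) (hx : x ∈ Λ₁) (hy : y ∉ Λ₁) (g : (Λ → ℕ) → ℝ) :
    ∑ τ ∈ level Λ₁ N (m + 1), weight c τ * ((τ x : ℝ) * g τ) =
      ∑ η ∈ level Λ₁ N m,
        weight c η * (c (η y) * (((η x : ℝ) + 1) / c (η x + 1) * g (jump y x η))) := by
  have hxy : x ≠ y := fun h => hy (h ▸ hx)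
  have hsource : ∑ η ∈ level Λ₁ N m with 1 ≤ η y,
      weight c η * (c (η y) * (((η x : ℝ) + 1) / c (η x + 1) * g (jump y x η))) =
      ∑ η ∈ level Λ₁ N m,
        weight c η * (c (η y) * (((η x : ℝ) + 1) / c (η x + 1) * g (jump y x η))) := by
    refine sum_filter_of_ne fun η _ hη => Nat.one_le_iff_ne_zero.2 fun h => hη ?_
    simp [h, hc0]
  have htarget : ∑ τ ∈ level Λ₁ N (m + 1) with 1 ≤ τ x, weight c τ * ((τ x : ℝ) * g τ) =
      ∑ τ ∈ level Λ₁ N (m + 1), weight c τ * ((τ x : ℝ) * g τ) := by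
    refine sum_filter_of_ne fun τ _ hτ => Nat.one_le_iff_ne_zero.2 fun h => hτ ?_
    simp [h]
  rw [← hsource, ← htarget]
  symm
  refine sum_nbij' (jump y x) (jump x y) ?_ ?_ ?_ ?_ ?_
  · intro η hη
    obtain ⟨hη, hηy⟩ := mem_filter.1 hη
    exact mem_filter.2 ⟨jump_mem_level hx hy hη hηy, by simp [jump]⟩
  · intro τ hτ
    obtain ⟨hτ, hτx⟩ := mem_filter.1 hτ
    exact mem_filter.2 ⟨jump_mem_level_pred hx hy hτ hτx, by simp [jump]⟩
  · exact fun η hη => jump_jump hxy (mem_filter.1 hη).2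
  · exact fun τ hτ => jump_jump hxy.symm (mem_filter.1 hτ).2
  · intro η hη
    have hηy := (mem_filter.1 hη).2
    rw [weight_jump c hxy hηy (hc _ hηy)]
    simp only [jump, if_true]
    push_cast
    ring

lemma levelSum_succ_eq (c : ℕ → ℝ) (hc0 : c 0 = 0) (hc : ∀ k, 0 < k → c k ≠ 0)
    {Λ₁ : Finset Λ} (N m : ℕ) (hy : y ∉ Λ₁) (g : (Λ → ℕ) → ℝ) :
    ((m : ℝ) + 1) * levelSum c Λ₁ N (m + 1) g =
      levelSum c Λ₁ N m (fun η =>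
        c (η y) * ∑ x ∈ Λ₁, (((η x : ℝ) + 1) / c (η x + 1)) * g (jump y x η)) := by
  calc ((m : ℝ) + 1) * levelSum c Λ₁ N (m + 1) g
      = ∑ τ ∈ level Λ₁ N (m + 1), ∑ x ∈ Λ₁, weight c τ * ((τ x : ℝ) * g τ) := by
        rw [levelSum, mul_sum]
        refine sum_congr rfl fun τ hτ => ?_
        rw [show ((m : ℝ) + 1) = ∑ x ∈ Λ₁, (τ x : ℝ) by
          exact_mod_cast (mem_level.1 hτ).2.symm, sum_mul]
        exact sum_congr rfl fun x _ => by ring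
    _ = ∑ x ∈ Λ₁, ∑ η ∈ level Λ₁ N m,
          weight c η * (c (η y) * (((η x : ℝ) + 1) / c (η x + 1) * g (jump y x η))) := by
        rw [sum_comm]
        exact sum_congr rfl fun x hx => sum_level_succ_mul_apply_eq c hc0 hc N m hx hy g
    _ = _ := by
        rw [sum_comm]
        simp only [levelSum, mul_sum]

lemma levelSum_succ_eq_gradient_add (c : ℕ → ℝ) (hc0 : c 0 = 0) (hc : ∀ k, 0 < k → c k ≠ 0)
    {Λ₁ : Finset Λ} (N m : ℕ) (hy : y ∉ Λ₁) (f : (Λ → ℕ) → ℝ) :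
    ((m : ℝ) + 1) * levelSum c Λ₁ N (m + 1) f =
      levelSum c Λ₁ N m (fun η =>
          c (η y) * ∑ x ∈ Λ₁, (((η x : ℝ) + 1) / c (η x + 1)) * (f (jump y x η) - f η)) +
        levelSum c Λ₁ N m (fun η => f η * (c (η y) * ∑ x ∈ Λ₁, ((η x : ℝ) + 1) / c (η x + 1))) := by
  rw [levelSum_succ_eq c hc0 hc N m hy, ← levelSum_add]
  congr 1
  funext η
  simp only [mul_sub, sum_sub_distrib, ← sum_mul]
  ring

end ZeroRange

open ZeroRange in
theorem gradient_representation_general {Λ : Type*} [Fintype Λ] [DecidableEq Λ]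
    (c : ℕ → ℝ) (hc0 : c 0 = 0) (hcpos : ∀ k, 0 < k → 0 < c k)
    (Λ₁ Λ₂ : Finset Λ) (hdisj : Disjoint Λ₁ Λ₂)
    (N n : ℕ) (hn1 : 1 ≤ n)
    (y : Λ) (hy : y ∈ Λ₂)
    (hγ : 0 < gammaFun c Λ₁ N n) (hγ' : 0 < gammaFun c Λ₁ N (n - 1))
    (f : (Λ → ℕ) → ℝ) :
    condExp c Λ₁ N n f - condExp c Λ₁ N (n - 1) f =
      (gammaFun c Λ₁ N (n - 1) / ((n : ℝ) * gammaFun c Λ₁ N n)) *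
        (condExp c Λ₁ N (n - 1) (fun η =>
            c (η y) * ∑ x ∈ Λ₁, (((η x : ℝ) + 1) / c (η x + 1)) *
              (f (fun z => if z = x then η x + 1 else if z = y then η y - 1 else η z) - f η))
          + (condExp c Λ₁ N (n - 1) (fun η =>
                f η * (c (η y) * ∑ x ∈ Λ₁, ((η x : ℝ) + 1) / c (η x + 1)))
              - condExp c Λ₁ N (n - 1) f *
                condExp c Λ₁ N (n - 1) (fun η =>
                  c (η y) * ∑ x ∈ Λ₁, ((η x : ℝ) + 1) / c (η x + 1)))) := by
  obtain ⟨m, rfl⟩ : ∃ m, n = m + 1 := ⟨n - 1, by omega⟩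
  rw [Nat.add_sub_cancel] at hγ' ⊢
  have hy₁ : y ∉ Λ₁ := disjoint_right.1 hdisj hy
  have hc : ∀ k, 0 < k → c k ≠ 0 := fun k hk => (hcpos k hk).ne'
  rw [gammaFun_eq_levelSum] at hγ hγ'
  obtain ⟨hmass, hZ⟩ := div_ne_zero_iff.1 hγ.ne'
  have hmass' := (div_ne_zero_iff.1 hγ'.ne').1
  have hparts := levelSum_succ_eq_gradient_add c hc0 hc N m hy₁ f
  have hcovar := levelSum_succ_eq c hc0 hc N m hy₁ 1
  simp only [Pi.one_apply, mul_one] at hcovar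
  simp only [condExp_eq_levelSum, gammaFun_eq_levelSum, ← hcovar]
  rw [eq_sub_of_add_eq hparts.symm]
  push_cast
  field_simp
  ring

/-- Gradient representation of `ν_Λ^N[f|η̄_{Λ₁}=n] − ν_Λ^N[f|η̄_{Λ₁}=n−1]` in terms of the
discrete gradient `∂_{yx}f(η) = f(η−δ_y+δ_x) − f(η)` and a conditional covariance, where
`h(k) = (k+1)/c(k+1)` and `y ∈ Λ₂` is arbitrary. -/
theorem gradient_representation {Λ : Type*} [Fintype Λ] [DecidableEq Λ]
    (c : ℕ → ℝ) (hc0 : c 0 = 0) (hcpos : ∀ k, 0 < k → 0 < c k)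
    (Λ₁ Λ₂ : Finset Λ) (hdisj : Disjoint Λ₁ Λ₂) (hpart : Λ₁ ∪ Λ₂ = Finset.univ)
    (hΛ₁ : Λ₁.Nonempty) (hΛ₂ : Λ₂.Nonempty)
    (N n : ℕ) (hn1 : 1 ≤ n) (hnN : n ≤ N)
    (y : Λ) (hy : y ∈ Λ₂)
    (hγ : 0 < gammaFun c Λ₁ N n) (hγ' : 0 < gammaFun c Λ₁ N (n - 1))
    (f : (Λ → ℕ) → ℝ) :
    condExp c Λ₁ N n f - condExp c Λ₁ N (n - 1) f =
      (gammaFun c Λ₁ N (n - 1) / ((n : ℝ) * gammaFun c Λ₁ N n)) *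
        (condExp c Λ₁ N (n - 1) (fun η =>
            c (η y) * ∑ x ∈ Λ₁, (((η x : ℝ) + 1) / c (η x + 1)) *
              (f (fun z => if z = x then η x + 1 else if z = y then η y - 1 else η z) - f η))
          + (condExp c Λ₁ N (n - 1) (fun η =>
                f η * (c (η y) * ∑ x ∈ Λ₁, ((η x : ℝ) + 1) / c (η x + 1)))
              - condExp c Λ₁ N (n - 1) f *
                condExp c Λ₁ N (n - 1) (fun η =>
                  c (η y) * ∑ x ∈ Λ₁, ((η x : ℝ) + 1) / c (η x + 1)))) :=
  gradient_representation_general c hc0 hcpos Λ₁ Λ₂ hdisj N n hn1 y hy hγ hγ' f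
end

section
/- Key identity for the grand canonical tail ratio: with μ_α the product zero-range grand canonical measure on ℕ^Λ and p(n) := μ_α[η̄_Λ = n], one has p(n+1) = (α/(n+1)) · ∑_{x∈Λ} μ_α[ ((η_x+1)/c(η_x+1)) · 1(η̄_Λ = n) ] for every n ∈ ℕ. -/
open Finset

/-- The grand canonical normalization `Z(α) = ∑_k α^k/c(k)!`. -/
noncomputable def grandZ (c : ℕ → ℝ) (α : ℝ) : ℝ := ∑' k : ℕ, α ^ k / cfact c k

/-- `pGC c α Λ n = μ_α[η̄_Λ = n]`, the probability under the grand canonical product measure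
with marginals `μ_α[η_x = k] = α^k/(Z(α) c(k)!)` that the total particle number equals `n`. -/
noncomputable def pGC (c : ℕ → ℝ) (α : ℝ) (Λ : Type*) [Fintype Λ] (n : ℕ) : ℝ :=
  ∑' η : Λ → ℕ,
    if (∑ x, η x) = n then ∏ x, α ^ η x / (grandZ c α * cfact c (η x)) else 0

lemma cfact_succ (c : ℕ → ℝ) (k : ℕ) : cfact c (k + 1) = cfact c k * c (k + 1) :=
  Finset.prod_range_succ _ _

lemma tsum_indicator_eq_sum {Λ : Type*} [Fintype Λ] [DecidableEq Λ] (m : ℕ) (f : (Λ → ℕ) → ℝ) :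
    (∑' η : Λ → ℕ, if (∑ x, η x) = m then f η else 0)
      = ∑ η ∈ (Fintype.piFinset fun _ : Λ => Finset.range (m + 1)).filter
          (fun η => (∑ x, η x) = m), f η := by
  rw [Finset.sum_filter]
  refine tsum_eq_sum ?_
  intro η hη
  simp only [Finset.mem_filter, Fintype.mem_piFinset, Finset.mem_range, not_forall,
    not_lt] at hη
  obtain ⟨x, hx⟩ := hη
  rw [if_neg]
  intro h
  have hle : η x ≤ ∑ z, η z :=
    Finset.single_le_sum (f := fun z => η z) (fun _ _ => Nat.zero_le _) (Finset.mem_univ x)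
  omega

/-- Key identity for the grand canonical tail ratio:
`p(n+1) = (α/(n+1)) ∑_{x∈Λ} μ_α[((η_x+1)/c(η_x+1))·1(η̄_Λ = n)]`. -/
theorem grand_canonical_key_identity {Λ : Type*} [Fintype Λ]
    (c : ℕ → ℝ) (hc0 : c 0 = 0) (hcpos : ∀ k, 0 < k → 0 < c k)
    (α : ℝ) (hα : 0 < α) (hsum : Summable fun k : ℕ => α ^ k / cfact c k)
    (n : ℕ) :
    pGC c α Λ (n + 1) =
      (α / (n + 1)) * ∑ x : Λ, ∑' η : Λ → ℕ,
        if (∑ z, η z) = n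
        then (((η x : ℝ) + 1) / c (η x + 1)) *
          ∏ z, α ^ η z / (grandZ c α * cfact c (η z))
        else 0 := by
  classical
  set F : ℕ → ℝ := fun k => α ^ k / (grandZ c α * cfact c k) with hF
  set T : ℕ → Finset (Λ → ℕ) := fun m =>
    (Fintype.piFinset fun _ : Λ => Finset.range (m + 1)).filter
      (fun η => (∑ x, η x) = m) with hT
  have hmem : ∀ (m : ℕ) (η : Λ → ℕ), η ∈ T m ↔ (∑ z, η z) = m := by
    intro m η
    simp only [hT, Finset.mem_filter, Fintype.mem_piFinset, Finset.mem_range]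
    constructor
    · exact fun h => h.2
    · intro h
      refine ⟨fun z => ?_, h⟩
      have hle : η z ≤ ∑ w, η w :=
        Finset.single_le_sum (f := fun w => η w) (fun _ _ => Nat.zero_le _) (Finset.mem_univ z)
      omega
  -- rewrite the LHS tsum as a finite sum
  have hL : pGC c α Λ (n + 1) = ∑ η ∈ T (n + 1), ∏ z, F (η z) := by
    rw [pGC]
    exact tsum_indicator_eq_sum (n + 1) _
  -- rewrite the inner RHS tsums as finite sums
  have hR : ∀ x : Λ,
      (∑' η : Λ → ℕ, if (∑ z, η z) = n
        then (((η x : ℝ) + 1) / c (η x + 1)) *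
          ∏ z, α ^ η z / (grandZ c α * cfact c (η z))
        else 0)
      = ∑ ξ ∈ T n, (((ξ x : ℝ) + 1) / c (ξ x + 1)) * ∏ z, F (ξ z) := by
    intro x
    exact tsum_indicator_eq_sum n _
  -- key per-site identity
  have key : ∀ x : Λ,
      α * ∑ ξ ∈ T n, (((ξ x : ℝ) + 1) / c (ξ x + 1)) * ∏ z, F (ξ z)
        = ∑ η ∈ T (n + 1), (η x : ℝ) * ∏ z, F (η z) := by
    intro x
    rw [Finset.mul_sum]
    have hfilter :
        ∑ η ∈ T (n + 1), (η x : ℝ) * ∏ z, F (η z)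
          = ∑ η ∈ (T (n + 1)).filter (fun η => η x ≠ 0), (η x : ℝ) * ∏ z, F (η z) := by
      refine (Finset.sum_filter_of_ne ?_).symm
      intro η _ hne
      by_contra h0
      exact hne (by simp [h0])
    rw [hfilter]
    refine Finset.sum_nbij' (i := fun ξ => Function.update ξ x (ξ x + 1))
      (j := fun η => Function.update η x (η x - 1)) ?_ ?_ ?_ ?_ ?_
    · intro ξ hξ
      have hs := (hmem n ξ).1 hξ
      simp only [Finset.mem_filter]
      constructor
      · rw [hmem]
        rw [Finset.sum_update_of_mem (Finset.mem_univ x)]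
        have : ∑ z, ξ z = ∑ z ∈ Finset.univ \ {x}, ξ z + ξ x :=
          (Finset.sum_eq_sum_sdiff_singleton_add (Finset.mem_univ x) _)
        omega
      · simp
    · intro η hη
      simp only [Finset.mem_filter] at hη
      obtain ⟨hη, hne⟩ := hη
      have hs := (hmem (n + 1) η).1 hη
      rw [hmem]
      rw [Finset.sum_update_of_mem (Finset.mem_univ x)]
      have : ∑ z, η z = ∑ z ∈ Finset.univ \ {x}, η z + η x :=
        (Finset.sum_eq_sum_sdiff_singleton_add (Finset.mem_univ x) _)
      omega
    · intro ξ hξ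
      funext z
      by_cases hz : z = x <;> simp [hz, Function.update]
    · intro η hη
      simp only [Finset.mem_filter] at hη
      funext z
      by_cases hz : z = x
      · subst hz
        have := hη.2
        simp only [Function.update_self]
        omega
      · simp [hz, Function.update]
    · intro ξ hξ
      have hx : Function.update ξ x (ξ x + 1) x = ξ x + 1 := Function.update_self _ _ _
      have hprod : (∏ z, F (Function.update ξ x (ξ x + 1) z))
          = F (ξ x + 1) * ∏ z ∈ Finset.univ \ {x}, F (ξ z) := by
        have hcomp : (fun z => F (Function.update ξ x (ξ x + 1) z))
            = Function.update (fun z => F (ξ z)) x (F (ξ x + 1)) := by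
          funext z
          by_cases hz : z = x <;> simp [hz, Function.update]
        rw [hcomp]
        exact Finset.prod_update_of_mem (Finset.mem_univ x) _ _
      have hprod' : (∏ z, F (ξ z)) = F (ξ x) * ∏ z ∈ Finset.univ \ {x}, F (ξ z) :=
        Finset.prod_eq_mul_prod_sdiff_singleton_of_mem (Finset.mem_univ x) _
      rw [hprod, hprod']
      simp only [Function.update_self]
      push_cast
      simp only [hF, cfact_succ, pow_succ, div_eq_mul_inv, mul_inv]
      ring
  -- final assembly
  have main : ((n : ℝ) + 1) * ∑ η ∈ T (n + 1), ∏ z, F (η z)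
      = α * ∑ x : Λ, ∑ ξ ∈ T n, (((ξ x : ℝ) + 1) / c (ξ x + 1)) * ∏ z, F (ξ z) := by
    rw [Finset.mul_sum]
    calc ∑ η ∈ T (n + 1), ((n : ℝ) + 1) * ∏ z, F (η z)
        = ∑ η ∈ T (n + 1), ∑ x : Λ, (η x : ℝ) * ∏ z, F (η z) := by
          refine Finset.sum_congr rfl fun η hη => ?_
          rw [← Finset.sum_mul]
          congr 1
          have hs := (hmem (n + 1) η).1 hη
          have : ((∑ z, η z : ℕ) : ℝ) = ((n : ℝ) + 1) := by rw [hs]; push_cast; ring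
          rw [← this]
          push_cast
          rfl
      _ = ∑ x : Λ, ∑ η ∈ T (n + 1), (η x : ℝ) * ∏ z, F (η z) := Finset.sum_comm
      _ = ∑ x : Λ, α * ∑ ξ ∈ T n, (((ξ x : ℝ) + 1) / c (ξ x + 1)) * ∏ z, F (ξ z) := by
          refine Finset.sum_congr rfl fun x _ => (key x).symm
      _ = α * ∑ x : Λ, ∑ ξ ∈ T n, (((ξ x : ℝ) + 1) / c (ξ x + 1)) * ∏ z, F (ξ z) :=
          (Finset.mul_sum _ _ _).symm
  rw [hL]
  have hcast : ((n : ℝ) + 1) ≠ 0 := by positivity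
  have hgoal : ∑ x : Λ, (∑' η : Λ → ℕ, if (∑ z, η z) = n
        then (((η x : ℝ) + 1) / c (η x + 1)) *
          ∏ z, α ^ η z / (grandZ c α * cfact c (η z))
        else 0)
      = ∑ x : Λ, ∑ ξ ∈ T n, (((ξ x : ℝ) + 1) / c (ξ x + 1)) * ∏ z, F (ξ z) :=
    Finset.sum_congr rfl fun x _ => hR x
  rw [hgoal]
  push_cast
  rw [div_mul_eq_mul_div, eq_div_iff hcast, ← main]
  ring
end
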